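/- arXiv:2604.21167 — 3 statements merged into one kernel-verified Lean document; each statement's English description precedes it below -/
import Mathlib

section
/- Let A be a K-algebra, π : G → End₀(A) an ideal partial representation, and Λ(A) the algebra with product ⌊g,a⌋·⌊h,b⌋ = ⌊g, a·π(g⁻¹h)(b)⌋. Then the map τ : Λ(A) → A determined by τ(⌊g,a⌋) = π(g)(a) is an algebra homomorphism, i.e. τ(u·v) = τ(u)·τ(v) for all u,v ∈ Λ(A). -/
open scoped TensorProduct

noncomputable section

/-- The relation submodule defining `Λ(A) = (KG ⊗ A)/⟨g ⊗ π_h(a) - gh ⊗ a⟩`. -/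
def lamRel (K G A : Type*) [CommRing K] [Group G] [AddCommGroup A] [Module K A]
    (π : G → A →ₗ[K] A) : Submodule K (MonoidAlgebra K G ⊗[K] A) :=
  Submodule.span K { x | ∃ (g h : G) (a : A), a ∈ LinearMap.range (π h⁻¹) ∧
    x = MonoidAlgebra.single g (1 : K) ⊗ₜ[K] (π h a)
      - MonoidAlgebra.single (g * h) (1 : K) ⊗ₜ[K] a }

/-- The class `⌊g, a⌋` of `g ⊗ a` in `Λ(A)`. -/
def floorQ {K G A : Type*} [CommRing K] [Group G] [AddCommGroup A] [Module K A]
    (π : G → A →ₗ[K] A) (g : G) (a : A) :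
    (MonoidAlgebra K G ⊗[K] A) ⧸ lamRel K G A π :=
  Submodule.Quotient.mk (MonoidAlgebra.single g (1 : K) ⊗ₜ[K] a)

/-- For an ideal partial representation `π` on a `K`-algebra `A`, the map
`τ : Λ(A) → A`, `τ ⌊g,a⌋ = π g a`, is an algebra homomorphism for the product
`⌊g,a⌋ · ⌊h,b⌋ = ⌊g, a * π (g⁻¹h) b⌋` on `Λ(A)`. -/
theorem stmt12 {K G A : Type*} [CommRing K] [Group G]
    [NonUnitalNonAssocRing A] [Module K A]
    (π : G → A →ₗ[K] A)
    (hmul : ∀ (g : G) (a b : A), π g (a * b) = π g a * π g b)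
    (h1 : ∀ a : A, π 1 a = a)
    (h2 : ∀ (g h : G) (a : A), π g⁻¹ (π g (π h a)) = π g⁻¹ (π (g * h) a))
    (h3 : ∀ (g h : G) (a : A), π g (π h (π h⁻¹ a)) = π (g * h) (π h⁻¹ a))
    (hideal : ∀ (g : G) (a b : A),
      a * π g b ∈ LinearMap.range (π g) ∧ π g b * a ∈ LinearMap.range (π g))
    (mul : ((MonoidAlgebra K G ⊗[K] A) ⧸ lamRel K G A π) →ₗ[K]
        ((MonoidAlgebra K G ⊗[K] A) ⧸ lamRel K G A π) →ₗ[K]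
        ((MonoidAlgebra K G ⊗[K] A) ⧸ lamRel K G A π))
    (hmulQ : ∀ (g h : G) (a b : A),
      mul (floorQ π g a) (floorQ π h b) = floorQ π g (a * π (g⁻¹ * h) b))
    (τ : ((MonoidAlgebra K G ⊗[K] A) ⧸ lamRel K G A π) →ₗ[K] A)
    (hτ : ∀ (g : G) (a : A), τ (floorQ π g a) = π g a) :
    ∀ u v, τ (mul u v) = τ u * τ v := by
  -- Key pointwise identity in A
  have hfix : ∀ (g : G) (x : A), x ∈ LinearMap.range (π g) → π g (π g⁻¹ x) = x := by
    rintro g x ⟨c, rfl⟩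
    have := h3 g g⁻¹ c
    simpa [h1] using this
  have key : ∀ (g h : G) (a b : A), π g (a * π (g⁻¹ * h) b) = π g a * π h b := by
    intro g h a b
    have hL : π g a * π h b ∈ LinearMap.range (π g) := (hideal g (π h b) a).2
    have hR : π g (a * π (g⁻¹ * h) b) ∈ LinearMap.range (π g) := ⟨_, rfl⟩
    have hinv : π g⁻¹ (π g (a * π (g⁻¹ * h) b)) = π g⁻¹ (π g a * π h b) := by
      rw [hmul g a (π (g⁻¹ * h) b), hmul g⁻¹, hmul g⁻¹]
      congr 1
      have := h2 g (g⁻¹ * h) b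
      simpa using this
    calc π g (a * π (g⁻¹ * h) b)
        = π g (π g⁻¹ (π g (a * π (g⁻¹ * h) b))) := (hfix g _ hR).symm
      _ = π g (π g⁻¹ (π g a * π h b)) := by rw [hinv]
      _ = π g a * π h b := hfix g _ hL
  -- Every element of the quotient is a finite sum of generators `floorQ π g a`
  set T : AddSubmonoid ((MonoidAlgebra K G ⊗[K] A) ⧸ lamRel K G A π) :=
    AddSubmonoid.closure { x | ∃ g a, x = floorQ π g a } with hT
  have hspan : ∀ w, w ∈ T := by
    intro w
    obtain ⟨t, rfl⟩ := Submodule.Quotient.mk_surjective _ w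
    induction t using TensorProduct.induction_on with
    | zero => simpa using T.zero_mem
    | tmul x a =>
        induction x using MonoidAlgebra.induction_linear with
        | zero => simpa using T.zero_mem
        | add f g hf hg =>
            have : ((f + g : MonoidAlgebra K G) ⊗ₜ[K] a) = f ⊗ₜ[K] a + g ⊗ₜ[K] a :=
              TensorProduct.add_tmul _ _ _
            rw [this, Submodule.Quotient.mk_add]
            exact T.add_mem hf hg
        | single g k =>
            have h1' : (MonoidAlgebra.single g k : MonoidAlgebra K G) =
                k • MonoidAlgebra.single g (1 : K) := by
              simp [MonoidAlgebra.smul_single']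
            have : ((MonoidAlgebra.single g k : MonoidAlgebra K G) ⊗ₜ[K] a) =
                MonoidAlgebra.single g (1 : K) ⊗ₜ[K] (k • a) := by
              rw [h1', TensorProduct.smul_tmul]
            rw [this]
            exact AddSubmonoid.subset_closure ⟨g, k • a, rfl⟩
    | add x y hx hy =>
        rw [Submodule.Quotient.mk_add]
        exact T.add_mem hx hy
  intro u v
  refine AddSubmonoid.closure_induction
    (motive := fun u _ => ∀ v, τ (mul u v) = τ u * τ v) ?_ ?_ ?_ (hspan u) v
  · rintro x ⟨g, a, rfl⟩ v
    refine AddSubmonoid.closure_induction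
      (motive := fun v _ => τ (mul (floorQ π g a) v) = τ (floorQ π g a) * τ v)
      ?_ ?_ ?_ (hspan v)
    · rintro y ⟨h, b, rfl⟩
      rw [hmulQ, hτ, hτ, hτ, key]
    · simp
    · intro x y hx hy px py
      simp [map_add, px, py, mul_add]
  · intro v; simp
  · intro x y hx hy px py v
    simp [map_add, px, py, add_mul]

end
end

section
/- Let A be an associative K-algebra and π : G → End₀(A) an ideal partial representation. Then Λ(A) with the product ⌊g,a⌋·⌊h,b⌋ = ⌊g, a·π(g⁻¹h)(b)⌋ is an associative algebra: (u·v)·w = u·(v·w) for all u,v,w ∈ Λ(A). -/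
open scoped TensorProduct

noncomputable section

/-- For an ideal partial representation `π` on an associative `K`-algebra `A`,
`Λ(A)` with the product `⌊g,a⌋ · ⌊h,b⌋ = ⌊g, a * π (g⁻¹h) b⌋` is associative. -/
theorem stmt14 {K G A : Type*} [CommRing K] [Group G]
    [NonUnitalRing A] [Module K A]
    (π : G → A →ₗ[K] A)
    (hmul : ∀ (g : G) (a b : A), π g (a * b) = π g a * π g b)
    (h1 : ∀ a : A, π 1 a = a)
    (h2 : ∀ (g h : G) (a : A), π g⁻¹ (π g (π h a)) = π g⁻¹ (π (g * h) a))
    (h3 : ∀ (g h : G) (a : A), π g (π h (π h⁻¹ a)) = π (g * h) (π h⁻¹ a))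
    (hideal : ∀ (g : G) (a b : A),
      a * π g b ∈ LinearMap.range (π g) ∧ π g b * a ∈ LinearMap.range (π g))
    (mul : ((MonoidAlgebra K G ⊗[K] A) ⧸ lamRel K G A π) →ₗ[K]
        ((MonoidAlgebra K G ⊗[K] A) ⧸ lamRel K G A π) →ₗ[K]
        ((MonoidAlgebra K G ⊗[K] A) ⧸ lamRel K G A π))
    (hmulQ : ∀ (g h : G) (a b : A),
      mul (floorQ π g a) (floorQ π h b) = floorQ π g (a * π (g⁻¹ * h) b)) :
    ∀ u v w, mul (mul u v) w = mul u (mul v w) := by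
  classical
  -- every element of the quotient lies in the span of the `floorQ` classes
  have hspan : ∀ u : (MonoidAlgebra K G ⊗[K] A) ⧸ lamRel K G A π,
      u ∈ Submodule.span K {x | ∃ g a, x = floorQ π g a} := by
    intro u
    obtain ⟨x, rfl⟩ := Submodule.Quotient.mk_surjective _ u
    induction x using TensorProduct.induction_on with
    | zero =>
        simpa using Submodule.zero_mem
          (Submodule.span K {x | ∃ g a, x = floorQ π g a})
    | tmul f a =>
        induction f using MonoidAlgebra.induction_linear with
        | zero =>
            have : ((0 : MonoidAlgebra K G) ⊗ₜ[K] a) = (0 : MonoidAlgebra K G ⊗[K] A) := by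
              simp
            rw [this]
            simpa using Submodule.zero_mem
              (Submodule.span K {x | ∃ g a, x = floorQ π g a})
        | add f g hf hg =>
            rw [TensorProduct.add_tmul, Submodule.Quotient.mk_add]
            exact Submodule.add_mem _ hf hg
        | single g k =>
            have h1' : (MonoidAlgebra.single g k : MonoidAlgebra K G) ⊗ₜ[K] a
                = k • ((MonoidAlgebra.single g (1 : K) : MonoidAlgebra K G) ⊗ₜ[K] a) := by
              rw [TensorProduct.smul_tmul', MonoidAlgebra.smul_single', mul_one]
            rw [h1', Submodule.Quotient.mk_smul]
            exact Submodule.smul_mem _ _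
              (Submodule.subset_span ⟨g, a, rfl⟩)
    | add x y hx hy =>
        rw [Submodule.Quotient.mk_add]
        exact Submodule.add_mem _ hx hy
  -- π g ∘ π g⁻¹ is the identity on the range of π g
  have hfix : ∀ (g : G) (a : A), a ∈ LinearMap.range (π g) → π g (π g⁻¹ a) = a := by
    rintro g _ ⟨b, rfl⟩
    have := h3 g g⁻¹ b
    simp only [inv_inv, mul_inv_cancel] at this
    rw [this, h1]
  -- the key multiplicative identity
  have key : ∀ (g h : G) (a b : A), π g a * π h b = π g (a * π (g⁻¹ * h) b) := by
    intro g h a b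
    have hx : π g a * π h b ∈ LinearMap.range (π g) := (hideal g (π h b) a).2
    have h2' : π g (π g⁻¹ (π h b)) = π g (π (g⁻¹ * h) b) := by
      have := h2 g⁻¹ h b
      simpa [inv_inv] using this
    calc π g a * π h b
        = π g (π g⁻¹ (π g a * π h b)) := (hfix g _ hx).symm
      _ = π g (π g⁻¹ (π g a) * π g⁻¹ (π h b)) := by rw [hmul]
      _ = π g (π g⁻¹ (π g a)) * π g (π g⁻¹ (π h b)) := hmul _ _ _
      _ = π g a * π g (π (g⁻¹ * h) b) := by
            rw [hfix g (π g a) ⟨a, rfl⟩, h2']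
      _ = π g (a * π (g⁻¹ * h) b) := (hmul _ _ _).symm
  -- associativity on generators
  have gen : ∀ (g h l : G) (a b c : A),
      mul (mul (floorQ π g a) (floorQ π h b)) (floorQ π l c)
        = mul (floorQ π g a) (mul (floorQ π h b) (floorQ π l c)) := by
    intro g h l a b c
    rw [hmulQ, hmulQ, hmulQ, hmulQ]
    congr 1
    rw [mul_assoc]
    congr 1
    have := key (g⁻¹ * h) (g⁻¹ * l) b c
    rw [this]
    congr 2
    group
  -- extend to all of Λ(A) by linearity, variable by variable
  have step3 : ∀ (g h : G) (a b : A) (w : (MonoidAlgebra K G ⊗[K] A) ⧸ lamRel K G A π),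
      mul (mul (floorQ π g a) (floorQ π h b)) w
        = mul (floorQ π g a) (mul (floorQ π h b) w) := by
    intro g h a b w
    refine Submodule.span_induction ?_ ?_ ?_ ?_ (hspan w)
    · rintro _ ⟨l, c, rfl⟩; exact gen g h l a b c
    · simp
    · intro x y _ _ hx hy; simp [map_add, hx, hy]
    · intro k x _ hx; simp [map_smul, hx]
  have step2 : ∀ (g : G) (a : A) (v w : (MonoidAlgebra K G ⊗[K] A) ⧸ lamRel K G A π),
      mul (mul (floorQ π g a) v) w = mul (floorQ π g a) (mul v w) := by
    intro g a v w
    refine Submodule.span_induction ?_ ?_ ?_ ?_ (hspan v)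
    · rintro _ ⟨h, b, rfl⟩; exact step3 g h a b w
    · simp
    · intro x y _ _ hx hy; simp [map_add, LinearMap.add_apply, hx, hy]
    · intro k x _ hx; simp [map_smul, LinearMap.smul_apply, hx]
  intro u v w
  refine Submodule.span_induction ?_ ?_ ?_ ?_ (hspan u)
  · rintro _ ⟨g, a, rfl⟩; exact step2 g a v w
  · simp
  · intro x y _ _ hx hy; simp [map_add, LinearMap.add_apply, hx, hy]
  · intro k x _ hx; simp [map_smul, LinearMap.smul_apply, hx]

end
end

section
/- Let L be a Lie algebra over K and π : G → End₀(L) an ideal partial representation. Then Λ(L) with the bracket ⌊g,a⌋·⌊h,b⌋ = ⌊g, [a, π(g⁻¹h)(b)]⌋ is a Lie algebra: the bracket is alternating and satisfies the Jacobi identity. -/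
open scoped TensorProduct

noncomputable section

private lemma lieaux {L : Type*} [LieRing L] (x y z : L) :
    ⁅⁅x,y⁆,z⁆ + ⁅⁅y,z⁆,x⁆ - ⁅⁅x,z⁆,y⁆ = 0 := by
  have e1 : ⁅y,⁅z,x⁆⁆ = -⁅y,⁅x,z⁆⁆ := by rw [(lie_skew z x).symm, lie_neg]
  have e2 : ⁅z,⁅y,x⁆⁆ = -⁅z,⁅x,y⁆⁆ := by rw [(lie_skew y x).symm, lie_neg]
  have e3 : ⁅x,⁅z,y⁆⁆ = -⁅x,⁅y,z⁆⁆ := by rw [(lie_skew z y).symm, lie_neg]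
  have e6 : ⁅z,⁅x,y⁆⁆ = ⁅y,⁅x,z⁆⁆ - ⁅x,⁅y,z⁆⁆ := by
    rw [neg_eq_iff_eq_neg.mp (lie_skew ⁅x,y⁆ z), lie_lie]; abel
  rw [lie_lie y z x, lie_lie x z y, e1, e2, e3, lie_lie x y z, e6]
  abel

set_option maxHeartbeats 1600000 in
/-- For an ideal partial representation `π` on a Lie `K`-algebra `L`,
`Λ(L)` with the bracket `⌊g,a⌋ · ⌊h,b⌋ = ⌊g, ⁅a, π (g⁻¹h) b⁆⌋` is a Lie
algebra: the bracket is alternating and satisfies the Jacobi identity. -/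
theorem stmt15 {K G L : Type*} [CommRing K] [Group G]
    [LieRing L] [LieAlgebra K L]
    (π : G → L →ₗ[K] L)
    (hlie : ∀ (g : G) (a b : L), π g ⁅a, b⁆ = ⁅π g a, π g b⁆)
    (h1 : ∀ a : L, π 1 a = a)
    (h2 : ∀ (g h : G) (a : L), π g⁻¹ (π g (π h a)) = π g⁻¹ (π (g * h) a))
    (h3 : ∀ (g h : G) (a : L), π g (π h (π h⁻¹ a)) = π (g * h) (π h⁻¹ a))
    (hideal : ∀ (g : G) (a b : L), ⁅a, π g b⁆ ∈ LinearMap.range (π g))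
    (mul : ((MonoidAlgebra K G ⊗[K] L) ⧸ lamRel K G L π) →ₗ[K]
        ((MonoidAlgebra K G ⊗[K] L) ⧸ lamRel K G L π) →ₗ[K]
        ((MonoidAlgebra K G ⊗[K] L) ⧸ lamRel K G L π))
    (hmulQ : ∀ (g h : G) (a b : L),
      mul (floorQ π g a) (floorQ π h b) = floorQ π g ⁅a, π (g⁻¹ * h) b⁆) :
    -- the bracket is alternating
    (∀ u, mul u u = 0) ∧
    -- Jacobi identity
    (∀ u v w, mul (mul u v) w + mul (mul v w) u + mul (mul w u) v = 0) := by
  classical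
  have hfix : ∀ (s : G) (x : L), x ∈ LinearMap.range (π s) → π s (π s⁻¹ x) = x := by
    rintro s x ⟨c, rfl⟩
    simpa [h1] using h3 s s⁻¹ c
  have hideal' : ∀ (s : G) (a b : L), ⁅π s a, b⁆ ∈ LinearMap.range (π s) := by
    intro s a b
    rw [show ⁅π s a, b⁆ = -⁅b, π s a⁆ from (lie_skew (π s a) b).symm]
    exact neg_mem (hideal s b a)
  have keyid : ∀ (g h : G) (a b : L), ⁅π g a, π h b⁆ = π g ⁅a, π (g⁻¹ * h) b⁆ := by
    intro g h a b
    have hmem : ⁅π g a, π h b⁆ ∈ LinearMap.range (π g) := hideal' g a (π h b)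
    have e0 : π g⁻¹ (π h b) = π g⁻¹ (π g (π (g⁻¹ * h) b)) := by
      have := h2 g (g⁻¹ * h) b
      rw [mul_inv_cancel_left] at this
      exact this.symm
    calc ⁅π g a, π h b⁆ = π g (π g⁻¹ ⁅π g a, π h b⁆) := (hfix g _ hmem).symm
      _ = π g ⁅π g⁻¹ (π g a), π g⁻¹ (π h b)⁆ := by rw [hlie]
      _ = π g ⁅π g⁻¹ (π g a), π g⁻¹ (π g (π (g⁻¹ * h) b))⁆ := by rw [e0]
      _ = π g (π g⁻¹ (π g ⁅a, π (g⁻¹ * h) b⁆)) := by rw [← hlie g⁻¹, ← hlie g]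
      _ = π g ⁅a, π (g⁻¹ * h) b⁆ := hfix g _ ⟨_, rfl⟩
  have hswap : ∀ (s : G) (a b : L), ⁅a, π s b⁆ = π s ⁅π s⁻¹ a, b⁆ := by
    intro s a b
    have hk := keyid s 1 b a
    rw [h1, mul_one] at hk
    calc ⁅a, π s b⁆ = -⁅π s b, a⁆ := (lie_skew a (π s b)).symm
      _ = -(π s ⁅b, π s⁻¹ a⁆) := by rw [hk]
      _ = π s (-⁅b, π s⁻¹ a⁆) := (map_neg _ _).symm
      _ = π s ⁅π s⁻¹ a, b⁆ := by rw [lie_skew]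
  have hrel : ∀ (g h : G) (a : L), a ∈ LinearMap.range (π h⁻¹) →
      floorQ π g (π h a) = floorQ π (g * h) a := by
    intro g h a ha
    exact (Submodule.Quotient.eq _).2 (Submodule.subset_span ⟨g, h, a, ha, rfl⟩)
  have hadd : ∀ (g : G) (x y : L), floorQ π g (x + y) = floorQ π g x + floorQ π g y := by
    intro g x y
    simp [floorQ, TensorProduct.tmul_add, Submodule.Quotient.mk_add]
  have hneg : ∀ (g : G) (x : L), floorQ π g (-x) = -floorQ π g x := by
    intro g x
    simp [floorQ, TensorProduct.tmul_neg, Submodule.Quotient.mk_neg]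
  have hzero : ∀ (g : G), floorQ π g 0 = 0 := by
    intro g
    simp [floorQ, TensorProduct.tmul_zero, Submodule.Quotient.mk_zero]
  have paperid : ∀ (g h : G) (a b : L),
      floorQ π g ⁅a, π (g⁻¹ * h) b⁆ = floorQ π h ⁅π (h⁻¹ * g) a, b⁆ := by
    intro g h a b
    have hm : ⁅π (g⁻¹ * h)⁻¹ a, b⁆ ∈ LinearMap.range (π (g⁻¹ * h)⁻¹) :=
      hideal' (g⁻¹ * h)⁻¹ a b
    calc floorQ π g ⁅a, π (g⁻¹ * h) b⁆
        = floorQ π g (π (g⁻¹ * h) ⁅π (g⁻¹ * h)⁻¹ a, b⁆) := by rw [hswap]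
      _ = floorQ π (g * (g⁻¹ * h)) ⁅π (g⁻¹ * h)⁻¹ a, b⁆ := hrel g (g⁻¹ * h) _ hm
      _ = floorQ π h ⁅π (h⁻¹ * g) a, b⁆ := by rw [mul_inv_cancel_left, mul_inv_rev, inv_inv]
  set S : Set ((MonoidAlgebra K G ⊗[K] L) ⧸ lamRel K G L π) :=
    Set.range (fun p : G × L => floorQ π p.1 p.2) with hS
  have hspan : ∀ u, u ∈ Submodule.span K S := by
    intro u
    obtain ⟨z, rfl⟩ := Submodule.Quotient.mk_surjective _ u
    induction z using TensorProduct.induction_on with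
    | zero => simpa using Submodule.zero_mem _
    | tmul x a =>
        induction x using MonoidAlgebra.induction_linear with
        | zero => simpa [TensorProduct.zero_tmul] using Submodule.zero_mem _
        | add f g hf hg =>
            rw [TensorProduct.add_tmul, Submodule.Quotient.mk_add]
            exact Submodule.add_mem _ hf hg
        | single g k =>
            have e : (MonoidAlgebra.single g k : MonoidAlgebra K G) ⊗ₜ[K] a
                = k • ((MonoidAlgebra.single g (1 : K)) ⊗ₜ[K] a) := by
              rw [TensorProduct.smul_tmul', MonoidAlgebra.smul_single', mul_one]
            rw [e, Submodule.Quotient.mk_smul]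
            exact Submodule.smul_mem _ _ (Submodule.subset_span ⟨(g, a), rfl⟩)
    | add x y hx hy =>
        rw [Submodule.Quotient.mk_add]
        exact Submodule.add_mem _ hx hy
  have hantigen : ∀ (g h : G) (a b : L),
      mul (floorQ π g a) (floorQ π h b) + mul (floorQ π h b) (floorQ π g a) = 0 := by
    intro g h a b
    rw [hmulQ, hmulQ, paperid g h a b, ← hadd]
    have e : ⁅π (h⁻¹ * g) a, b⁆ + ⁅b, π (h⁻¹ * g) a⁆ = 0 := by
      rw [← lie_skew b (π (h⁻¹ * g) a)]; abel
    rw [e, hzero]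
  have hanti : ∀ u v, mul u v + mul v u = 0 := by
    have step : ∀ (g : G) (a : L) (v), mul (floorQ π g a) v + mul v (floorQ π g a) = 0 := by
      intro g a v
      have hker : Submodule.span K S ≤ LinearMap.ker
          (mul (floorQ π g a) + (LinearMap.flip mul) (floorQ π g a)) := by
        refine Submodule.span_le.2 ?_
        rintro _ ⟨⟨h, b⟩, rfl⟩
        simpa using hantigen g h a b
      simpa using hker (hspan v)
    intro u v
    have hker : Submodule.span K S ≤ LinearMap.ker ((LinearMap.flip mul) v + mul v) := by
      refine Submodule.span_le.2 ?_
      rintro _ ⟨⟨g, a⟩, rfl⟩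
      simpa using step g a v
    simpa using hker (hspan u)
  -- generator Jacobi
  have jacgen : ∀ (g h k : G) (a b c : L),
      mul (mul (floorQ π g a) (floorQ π h b)) (floorQ π k c)
      + mul (mul (floorQ π h b) (floorQ π k c)) (floorQ π g a)
      + mul (mul (floorQ π k c) (floorQ π g a)) (floorQ π h b) = 0 := by
    intro g h k a b c
    have t1 : mul (mul (floorQ π g a) (floorQ π h b)) (floorQ π k c)
        = floorQ π g ⁅⁅a, π (g⁻¹*h) b⁆, π (g⁻¹*k) c⁆ := by rw [hmulQ, hmulQ]
    have e2 : π (g⁻¹*h) ⁅b, π (h⁻¹*k) c⁆ = ⁅π (g⁻¹*h) b, π (g⁻¹*k) c⁆ := by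
      have hk := keyid (g⁻¹*h) (g⁻¹*k) b c
      have eg : (g⁻¹*h)⁻¹ * (g⁻¹*k) = h⁻¹*k := by group
      rw [eg] at hk
      exact hk.symm
    have t2 : mul (mul (floorQ π h b) (floorQ π k c)) (floorQ π g a)
        = floorQ π g ⁅⁅π (g⁻¹*h) b, π (g⁻¹*k) c⁆, a⁆ := by
      rw [hmulQ, hmulQ, paperid h g ⁅b, π (h⁻¹*k) c⁆ a, e2]
    have e3 : π (h⁻¹*k) ⁅c, π (k⁻¹*g) a⁆ = ⁅π (h⁻¹*k) c, π (h⁻¹*g) a⁆ := by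
      have hk := keyid (h⁻¹*k) (h⁻¹*g) c a
      have eg : (h⁻¹*k)⁻¹ * (h⁻¹*g) = k⁻¹*g := by group
      rw [eg] at hk
      exact hk.symm
    have e4 : π (h⁻¹*g) ⁅a, π (g⁻¹*k) c⁆ = ⁅π (h⁻¹*g) a, π (h⁻¹*k) c⁆ := by
      have hk := keyid (h⁻¹*g) (h⁻¹*k) a c
      have eg : (h⁻¹*g)⁻¹ * (h⁻¹*k) = g⁻¹*k := by group
      rw [eg] at hk
      exact hk.symm
    have t3 : mul (mul (floorQ π k c) (floorQ π g a)) (floorQ π h b)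
        = - floorQ π g ⁅⁅a, π (g⁻¹*k) c⁆, π (g⁻¹*h) b⁆ := by
      rw [hmulQ, hmulQ, paperid k h ⁅c, π (k⁻¹*g) a⁆ b, e3]
      have es : ⁅π (h⁻¹*k) c, π (h⁻¹*g) a⁆ = -(π (h⁻¹*g) ⁅a, π (g⁻¹*k) c⁆) := by
        rw [e4]; exact (lie_skew _ _).symm
      rw [es, neg_lie, hneg, ← paperid g h ⁅a, π (g⁻¹*k) c⁆ b]
    rw [t1, t2, t3, ← hneg, ← hadd, ← hadd, ← sub_eq_add_neg, lieaux, hzero]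
  refine ⟨?_, ?_⟩
  · intro u
    induction hspan u using Submodule.span_induction with
    | mem x hx =>
        obtain ⟨⟨g, a⟩, rfl⟩ := hx
        rw [hmulQ, inv_mul_cancel, h1, lie_self, hzero]
    | zero => simp only [map_zero, LinearMap.zero_apply, add_zero, zero_add]
    | add x y hx hy px py =>
        have e : mul (x + y) (x + y) = mul x x + mul y y + (mul x y + mul y x) := by
          simp only [map_add, LinearMap.add_apply]; abel
        rw [e, px, py, hanti x y]; simp
    | smul k x hx px =>
        simp only [map_smul, LinearMap.smul_apply, px, smul_zero]
  · intro u v w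
    induction hspan u using Submodule.span_induction with
    | mem x hx =>
        obtain ⟨⟨g, a⟩, rfl⟩ := hx
        induction hspan v using Submodule.span_induction with
        | mem y hy =>
            obtain ⟨⟨h, b⟩, rfl⟩ := hy
            induction hspan w using Submodule.span_induction with
            | mem z hz =>
                obtain ⟨⟨k, c⟩, rfl⟩ := hz
                exact jacgen g h k a b c
            | zero => simp only [map_zero, LinearMap.zero_apply, add_zero, zero_add]
            | add z1 z2 hz1 hz2 p1 p2 =>
                have e : mul (mul (floorQ π g a) (floorQ π h b)) (z1 + z2)
                    + mul (mul (floorQ π h b) (z1 + z2)) (floorQ π g a)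
                    + mul (mul (z1 + z2) (floorQ π g a)) (floorQ π h b)
                    = (mul (mul (floorQ π g a) (floorQ π h b)) z1
                      + mul (mul (floorQ π h b) z1) (floorQ π g a)
                      + mul (mul z1 (floorQ π g a)) (floorQ π h b))
                    + (mul (mul (floorQ π g a) (floorQ π h b)) z2
                      + mul (mul (floorQ π h b) z2) (floorQ π g a)
                      + mul (mul z2 (floorQ π g a)) (floorQ π h b)) := by
                  simp only [map_add, LinearMap.add_apply]; abel
                rw [e, p1, p2, add_zero]
            | smul r z hz p =>
                have e : mul (mul (floorQ π g a) (floorQ π h b)) (r • z)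
                    + mul (mul (floorQ π h b) (r • z)) (floorQ π g a)
                    + mul (mul (r • z) (floorQ π g a)) (floorQ π h b)
                    = r • (mul (mul (floorQ π g a) (floorQ π h b)) z
                      + mul (mul (floorQ π h b) z) (floorQ π g a)
                      + mul (mul z (floorQ π g a)) (floorQ π h b)) := by
                  simp only [map_smul, LinearMap.smul_apply, smul_add]
                rw [e, p, smul_zero]
        | zero => simp only [map_zero, LinearMap.zero_apply, add_zero, zero_add]
        | add y1 y2 hy1 hy2 p1 p2 =>
            have e : mul (mul (floorQ π g a) (y1 + y2)) w
                + mul (mul (y1 + y2) w) (floorQ π g a)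
                + mul (mul w (floorQ π g a)) (y1 + y2)
                = (mul (mul (floorQ π g a) y1) w
                  + mul (mul y1 w) (floorQ π g a)
                  + mul (mul w (floorQ π g a)) y1)
                + (mul (mul (floorQ π g a) y2) w
                  + mul (mul y2 w) (floorQ π g a)
                  + mul (mul w (floorQ π g a)) y2) := by
              simp only [map_add, LinearMap.add_apply]; abel
            rw [e, p1, p2, add_zero]
        | smul r y hy p =>
            have e : mul (mul (floorQ π g a) (r • y)) w
                + mul (mul (r • y) w) (floorQ π g a)
                + mul (mul w (floorQ π g a)) (r • y)
                = r • (mul (mul (floorQ π g a) y) w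
                  + mul (mul y w) (floorQ π g a)
                  + mul (mul w (floorQ π g a)) y) := by
              simp only [map_smul, LinearMap.smul_apply, smul_add]
            rw [e, p, smul_zero]
    | zero => simp only [map_zero, LinearMap.zero_apply, add_zero, zero_add]
    | add x1 x2 hx1 hx2 p1 p2 =>
        have e : mul (mul (x1 + x2) v) w + mul (mul v w) (x1 + x2)
            + mul (mul w (x1 + x2)) v
            = (mul (mul x1 v) w + mul (mul v w) x1 + mul (mul w x1) v)
            + (mul (mul x2 v) w + mul (mul v w) x2 + mul (mul w x2) v) := by
          simp only [map_add, LinearMap.add_apply]; abel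
        rw [e, p1, p2, add_zero]
    | smul r x hx p =>
        have e : mul (mul (r • x) v) w + mul (mul v w) (r • x) + mul (mul w (r • x)) v
            = r • (mul (mul x v) w + mul (mul v w) x + mul (mul w x) v) := by
          simp only [map_smul, LinearMap.smul_apply, smul_add]
        rw [e, p, smul_zero]


end
end
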